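/- For every m ≥ 0 the following hold for the monic generalized Hermite polynomials: (a) every real root z₀ ≠ 0 of K_{2m+1}^{(γ)} satisfies (2m+1+γ)·K_{2m}^{(γ)}(z₀) = (K_{2m+1}^{(γ)})'(z₀); (b) K_{2m+1}^{(γ)}(0) = 0 and (2m+1+γ)·K_{2m}^{(γ)}(0) = (γ+1)·(K_{2m+1}^{(γ)})'(0). In other words, the reversed measure ξ_{γ,2m}^R, whose Stieltjes transform is K_{2m}^{(γ)}/K_{2m+1}^{(γ)}, has equal masses 1/(2m+1+γ) at all support points different from 0 and mass (γ+1)/(2m+1+γ) at the point 0. -/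
import Mathlib


open Polynomial

/-- The monic generalized Hermite polynomials `K_n^{(γ)}`, defined by `K 0 = 1`, `K 1 = X`
and `K_{n+1}(x) = x · K_n(x) - â_n · K_{n-1}(x)` where `â_n = n/2` for even `n` and
`â_n = (n+γ)/2` for odd `n`; they are orthogonal with respect to `|x|^γ exp(-x²)` on `ℝ`. -/
noncomputable def genHermite (γ : ℝ) : ℕ → Polynomial ℝ
  | 0 => 1
  | 1 => Polynomial.X
  | n + 2 =>
      Polynomial.X * genHermite γ (n + 1) -
        Polynomial.C (if Even (n + 1) then ((n : ℝ) + 1) / 2 else ((n : ℝ) + 1 + γ) / 2) *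
          genHermite γ n

lemma gH_rec (γ : ℝ) (n : ℕ) : genHermite γ (n + 2) =
    X * genHermite γ (n + 1) -
      C (if Even (n + 1) then ((n : ℝ) + 1) / 2 else ((n : ℝ) + 1 + γ) / 2) *
        genHermite γ n := by
  rw [genHermite]

lemma gH_even_rec (γ : ℝ) (m : ℕ) : genHermite γ (2 * m + 2) =
    X * genHermite γ (2 * m + 1) - C ((2 * (m : ℝ) + 1 + γ) / 2) * genHermite γ (2 * m) := by
  have h := gH_rec γ (2 * m)
  have hne : ¬ Even (2 * m + 1) := by simp [Nat.even_add_one]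
  rw [h, if_neg hne]
  push_cast
  ring_nf

lemma gH_odd_rec (γ : ℝ) (m : ℕ) : genHermite γ (2 * m + 3) =
    X * genHermite γ (2 * m + 2) - C ((m : ℝ) + 1) * genHermite γ (2 * m + 1) := by
  have h := gH_rec γ (2 * m + 1)
  have he : Even (2 * m + 1 + 1) := ⟨m + 1, by ring⟩
  rw [show 2 * m + 3 = 2 * m + 1 + 2 from rfl, h, if_pos he]
  push_cast
  ring_nf

lemma gH_odd_rec' (γ : ℝ) (m : ℕ) : genHermite γ (2 * m + 1) =
    X * genHermite γ (2 * m) - C (m : ℝ) * genHermite γ (2 * m - 1) := by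
  cases m with
  | zero => simp [genHermite]
  | succ k =>
    have h := gH_odd_rec γ k
    push_cast
    exact h

lemma gH_EO (γ : ℝ) (m : ℕ) :
    (∀ x : ℝ, x * (derivative (genHermite γ (2 * m))).eval x =
      2 * (m : ℝ) * x * (genHermite γ (2 * m - 1)).eval x) ∧
    (∀ x : ℝ, x * (derivative (genHermite γ (2 * m + 1))).eval x =
      (2 * (m : ℝ) + 1 + γ) * x * (genHermite γ (2 * m)).eval x -
        γ * (genHermite γ (2 * m + 1)).eval x) := by
  induction m with
  | zero =>
    constructor
    · intro x; simp [genHermite]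
    · intro x; simp [genHermite]; ring
  | succ m ih =>
    obtain ⟨ihE, ihO⟩ := ih
    have hE : ∀ x : ℝ, x * (derivative (genHermite γ (2 * m + 2))).eval x =
        (2 * (m : ℝ) + 2) * x * (genHermite γ (2 * m + 1)).eval x := by
      intro x
      have h1 : (derivative (genHermite γ (2 * m + 2))).eval x =
          (genHermite γ (2 * m + 1)).eval x +
            x * (derivative (genHermite γ (2 * m + 1))).eval x -
            ((2 * (m : ℝ) + 1 + γ) / 2) * (derivative (genHermite γ (2 * m))).eval x := by
        rw [gH_even_rec]
        simp [derivative_mul]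
      have h2 := ihO x
      have h3 := ihE x
      have h4 : (genHermite γ (2 * m + 1)).eval x =
          x * (genHermite γ (2 * m)).eval x - (m : ℝ) * (genHermite γ (2 * m - 1)).eval x := by
        rw [gH_odd_rec']; simp
      linear_combination x * h1 + x * h2 - ((2 * (m : ℝ) + 1 + γ) / 2) * h3 -
        (2 * (m : ℝ) + 1 + γ) * x * h4
    constructor
    · intro x
      have h := hE x
      rw [show 2 * (m + 1) = 2 * m + 2 from by ring]
      rw [show 2 * m + 2 - 1 = 2 * m + 1 from by omega]
      push_cast
      linear_combination h
    · intro x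
      have h1 : (derivative (genHermite γ (2 * m + 3))).eval x =
          (genHermite γ (2 * m + 2)).eval x +
            x * (derivative (genHermite γ (2 * m + 2))).eval x -
            ((m : ℝ) + 1) * (derivative (genHermite γ (2 * m + 1))).eval x := by
        rw [gH_odd_rec]
        simp [derivative_mul]
      have h2 := hE x
      have h3 := ihO x
      have h4 : (genHermite γ (2 * m + 3)).eval x =
          x * (genHermite γ (2 * m + 2)).eval x -
            ((m : ℝ) + 1) * (genHermite γ (2 * m + 1)).eval x := by
        rw [gH_odd_rec]; simp
      have h5 : (genHermite γ (2 * m + 2)).eval x =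
          x * (genHermite γ (2 * m + 1)).eval x -
            ((2 * (m : ℝ) + 1 + γ) / 2) * (genHermite γ (2 * m)).eval x := by
        rw [gH_even_rec]; simp
      rw [show 2 * (m + 1) = 2 * m + 2 from by ring]
      rw [show 2 * m + 2 + 1 = 2 * m + 3 from rfl]
      push_cast
      linear_combination x * h1 + x * h2 - ((m : ℝ) + 1) * h3 + γ * h4 -
        (2 * (m : ℝ) + 2) * x * h5

lemma gH_odd_zero (γ : ℝ) (m : ℕ) : (genHermite γ (2 * m + 1)).eval 0 = 0 := by
  induction m with
  | zero => simp [genHermite]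
  | succ m ih =>
    show (genHermite γ (2 * m + 3)).eval 0 = 0
    rw [gH_odd_rec]
    simp [ih]

lemma gH_b (γ : ℝ) (m : ℕ) :
    (2 * (m : ℝ) + 1 + γ) * (genHermite γ (2 * m)).eval 0 =
      (γ + 1) * (derivative (genHermite γ (2 * m + 1))).eval 0 := by
  induction m with
  | zero => simp [genHermite]; ring
  | succ m ih =>
    have ha : (genHermite γ (2 * m + 2)).eval 0 =
        -((2 * (m : ℝ) + 1 + γ) / 2) * (genHermite γ (2 * m)).eval 0 := by
      rw [gH_even_rec]
      simp [gH_odd_zero]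
    have hb : (derivative (genHermite γ (2 * m + 3))).eval 0 =
        (genHermite γ (2 * m + 2)).eval 0 -
          ((m : ℝ) + 1) * (derivative (genHermite γ (2 * m + 1))).eval 0 := by
      rw [gH_odd_rec]
      simp [derivative_mul]
    rw [show 2 * (m + 1) = 2 * m + 2 from by ring]
    rw [show 2 * m + 2 + 1 = 2 * m + 3 from rfl]
    push_cast
    linear_combination -(γ + 1) * hb - ((m : ℝ) + 1) * ih + (2 * (m : ℝ) + 2) * ha

/-- **Masses of the reversed measure for odd-degree generalized Hermite polynomials.**
For every `m ≥ 0`: (a) every real root `z₀ ≠ 0` of `K_{2m+1}^{(γ)}` satisfies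
`(2m+1+γ) · K_{2m}^{(γ)}(z₀) = (K_{2m+1}^{(γ)})'(z₀)`; and (b) `K_{2m+1}^{(γ)}(0) = 0` and
`(2m+1+γ) · K_{2m}^{(γ)}(0) = (γ+1) · (K_{2m+1}^{(γ)})'(0)`.  That is, the reversed measure
`ξ_{γ,2m}^R` with Stieltjes transform `K_{2m}^{(γ)}/K_{2m+1}^{(γ)}` has equal masses
`1/(2m+1+γ)` at all support points different from `0` and mass `(γ+1)/(2m+1+γ)` at `0`. -/
theorem genHermite_odd_reversed_masses (γ : ℝ) (hγ : -1 < γ) (m : ℕ) :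
    (∀ z₀ : ℝ, z₀ ≠ 0 → (genHermite γ (2 * m + 1)).eval z₀ = 0 →
      (2 * (m : ℝ) + 1 + γ) * (genHermite γ (2 * m)).eval z₀ =
        (Polynomial.derivative (genHermite γ (2 * m + 1))).eval z₀) ∧
    (genHermite γ (2 * m + 1)).eval 0 = 0 ∧
    (2 * (m : ℝ) + 1 + γ) * (genHermite γ (2 * m)).eval 0 =
      (γ + 1) * (Polynomial.derivative (genHermite γ (2 * m + 1))).eval 0 := by
  refine ⟨?_, gH_odd_zero γ m, gH_b γ m⟩
  intro z₀ hz₀ hroot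
  have h := (gH_EO γ m).2 z₀
  apply mul_left_cancel₀ hz₀
  linear_combination -h + γ * hroot
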